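/- Let Ω ⊂ ℝⁿ be a bounded measurable set with positive measure and p > 1. For every f ∈ 𝕃^{p log}(Ω) with ‖f‖_p > 0 one has ‖f‖_{𝕃^{p log}(Ω)} ≤ [f]_{𝕃^{p log}(Ω)} ≤ 4·‖f‖_{𝕃^{p log}(Ω)}. -/

import Mathlib

/-!
Write `A = ⨍ |f|^p`, so that `‖f‖_p = A^{1/p}`, and `Φ(c) = ⨍ |f|^p log(e + |f|/c)`,
which is antitone in `c` and at least `A`. A level `σ > 0` is admissible for the Luxemburg
norm iff `A + Φ(σ) ≤ σ^p`, and the modular is `M = (A + Φ(‖f‖_p))^{1/p}`.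

Since `M ≥ ‖f‖_p`, monotonicity gives `A + Φ(M) ≤ A + Φ(‖f‖_p) = M^p`, so `M` is
admissible. Conversely, an admissible `σ` satisfies `2A ≤ σ^p`, hence `‖f‖_p ≤ σ`, and the
pointwise bound `e + |f|/‖f‖_p ≤ t (e + |f|/σ)` with `t = σ/‖f‖_p ≥ 1` gives
`Φ(‖f‖_p) ≤ A log t + Φ(σ)`. As `log t ≤ t^p` and `t^p A = σ^p`, this yields
`M^p ≤ 2σ^p`, i.e. `M ≤ 2σ`.

Nothing here depends on the normalisation of the measure: the same holds with `⨍` replaced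
by integration against any measure.
-/

open Real MeasureTheory

variable {n : ℕ}

/-- The mean `L^p` norm `‖f‖_p = (⨍_Ω |f|^p)^{1/p}` (with mean integral). -/
noncomputable def meanLpNorm (Ω : Set (EuclideanSpace ℝ (Fin n))) (p : ℝ)
    (f : EuclideanSpace ℝ (Fin n) → ℝ) : ℝ :=
  (⨍ x in Ω, |f x| ^ p) ^ (1 / p)

/-- The Luxemburg norm of the space `𝕃^{p log}(Ω)` (mean-integral form). -/
noncomputable def luxNormPlog (Ω : Set (EuclideanSpace ℝ (Fin n))) (p : ℝ)
    (f : EuclideanSpace ℝ (Fin n) → ℝ) : ℝ :=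
  sInf {σ : ℝ | 0 < σ ∧
    ⨍ x in Ω, (|f x| ^ p / σ ^ p) +
      (|f x| ^ p / σ ^ p) * Real.log (Real.exp 1 + |f x| / σ) ≤ 1}

/-- The modular `[f]_{𝕃^{p log}(Ω)}`. -/
noncomputable def modularPlog (Ω : Set (EuclideanSpace ℝ (Fin n))) (p : ℝ)
    (f : EuclideanSpace ℝ (Fin n) → ℝ) : ℝ :=
  (⨍ x in Ω, |f x| ^ p +
    |f x| ^ p * Real.log (Real.exp 1 + |f x| / meanLpNorm Ω p f)) ^ (1 / p)

lemma one_le_log_exp_one_add {t : ℝ} (ht : 0 ≤ t) : 1 ≤ log (exp 1 + t) := by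
  simpa using log_le_log (exp_pos 1) (le_add_of_nonneg_right ht)

lemma log_exp_one_add_div_le {a c d : ℝ} (ha : 0 ≤ a) (hc : 0 < c) (hcd : c ≤ d) :
    log (exp 1 + a / c) ≤ log (d / c) + log (exp 1 + a / d) := by
  have hd : 0 < d := hc.trans_le hcd
  have hdc : 1 ≤ d / c := (one_le_div hc).2 hcd
  rw [← log_mul (by positivity) (by positivity)]
  refine log_le_log (by positivity) ?_
  calc exp 1 + a / c ≤ d / c * exp 1 + a / c := by nlinarith [exp_pos 1]
    _ = d / c * (exp 1 + a / d) := by field_simp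

section PLog

variable {α : Type*} [MeasurableSpace α] {μ : Measure α} {p c d : ℝ} {f : α → ℝ}

noncomputable def rpowLogMoment (μ : Measure α) (p : ℝ) (f : α → ℝ) (c : ℝ) : ℝ :=
  ∫ x, |f x| ^ p * log (exp 1 + |f x| / c) ∂μ

def plogLuxemburgSet (μ : Measure α) (p : ℝ) (f : α → ℝ) : Set ℝ :=
  {σ | 0 < σ ∧
    ∫ x, |f x| ^ p / σ ^ p + |f x| ^ p / σ ^ p * log (exp 1 + |f x| / σ) ∂μ ≤ 1}

noncomputable def plogModular (μ : Measure α) (p : ℝ) (f : α → ℝ) : ℝ :=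
  (∫ x, |f x| ^ p + |f x| ^ p * log (exp 1 + |f x| / (∫ x, |f x| ^ p ∂μ) ^ (1 / p)) ∂μ) ^
    (1 / p)

lemma integrable_rpow_abs_mul_log_of_integrable_add (hf : AEMeasurable f μ)
    (h : Integrable (fun x => |f x| ^ p + |f x| ^ p * log (exp 1 + |f x|)) μ) :
    Integrable (fun x => |f x| ^ p * log (exp 1 + |f x|)) μ :=
  h.mono' (by fun_prop) <| ae_of_all _ fun x => by
    have hlog := one_le_log_exp_one_add (abs_nonneg (f x))
    have hg : 0 ≤ |f x| ^ p := by positivity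
    rw [norm_of_nonneg (by positivity)]
    nlinarith

variable (hf : AEMeasurable f μ)
  (hL : Integrable (fun x => |f x| ^ p * log (exp 1 + |f x|)) μ)
include hf hL

lemma integrable_rpow_abs_of_integrable_mul_log : Integrable (fun x => |f x| ^ p) μ :=
  hL.mono' (hf.abs.pow_const p).aestronglyMeasurable <| ae_of_all _ fun x => by
    rw [norm_of_nonneg (by positivity)]
    exact le_mul_of_one_le_right (by positivity) (one_le_log_exp_one_add (abs_nonneg _))

lemma integrable_rpow_abs_mul_log_div (hc : 0 < c) :
    Integrable (fun x => |f x| ^ p * log (exp 1 + |f x| / c)) μ := by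
  set d := max c 1
  have hcd : c ≤ d := le_max_left c 1
  have hd1 : 1 ≤ d := le_max_right c 1
  refine ((integrable_rpow_abs_of_integrable_mul_log hf hL).const_mul (log (d / c))
    |>.add hL).mono' (by fun_prop) (ae_of_all _ fun x => ?_)
  have hlog : log (exp 1 + |f x| / c) ≤ log (d / c) + log (exp 1 + |f x|) := by
    refine (log_exp_one_add_div_le (abs_nonneg _) hc hcd).trans ?_
    gcongr
    exact div_le_self (abs_nonneg _) hd1
  have hg : 0 ≤ |f x| ^ p := by positivity
  rw [norm_of_nonneg (mul_nonneg hg (zero_le_one.trans (one_le_log_exp_one_add (by positivity))))]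
  simp only [Pi.add_apply]
  nlinarith

lemma integral_rpow_abs_le_rpowLogMoment (hc : 0 < c) :
    ∫ x, |f x| ^ p ∂μ ≤ rpowLogMoment μ p f c :=
  integral_mono (integrable_rpow_abs_of_integrable_mul_log hf hL)
    (integrable_rpow_abs_mul_log_div hf hL hc) fun x =>
      le_mul_of_one_le_right (by positivity) (one_le_log_exp_one_add (by positivity))

lemma rpowLogMoment_anti (hc : 0 < c) (hcd : c ≤ d) :
    rpowLogMoment μ p f d ≤ rpowLogMoment μ p f c := by
  have hd : 0 < d := hc.trans_le hcd
  refine integral_mono (integrable_rpow_abs_mul_log_div hf hL hd)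
    (integrable_rpow_abs_mul_log_div hf hL hc) fun x => ?_
  dsimp only
  gcongr

lemma rpowLogMoment_le_log_div_mul_add (hc : 0 < c) (hcd : c ≤ d) :
    rpowLogMoment μ p f c ≤ log (d / c) * ∫ x, |f x| ^ p ∂μ + rpowLogMoment μ p f d := by
  have hd : 0 < d := hc.trans_le hcd
  have hg := integrable_rpow_abs_of_integrable_mul_log hf hL
  rw [← integral_const_mul, rpowLogMoment, rpowLogMoment,
    ← integral_add (hg.const_mul _) (integrable_rpow_abs_mul_log_div hf hL hd)]
  refine integral_mono (integrable_rpow_abs_mul_log_div hf hL hc)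
    ((hg.const_mul _).add (integrable_rpow_abs_mul_log_div hf hL hd)) fun x => ?_
  have hlog := log_exp_one_add_div_le (abs_nonneg (f x)) hc hcd
  have hg0 : 0 ≤ |f x| ^ p := by positivity
  nlinarith

lemma integral_plog_div_rpow {σ : ℝ} (hσ : 0 < σ) :
    ∫ x, |f x| ^ p / σ ^ p + |f x| ^ p / σ ^ p * log (exp 1 + |f x| / σ) ∂μ =
      (∫ x, |f x| ^ p ∂μ + rpowLogMoment μ p f σ) / σ ^ p := by
  rw [rpowLogMoment, ← integral_add (integrable_rpow_abs_of_integrable_mul_log hf hL)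
    (integrable_rpow_abs_mul_log_div hf hL hσ), ← integral_div]
  congr 1 with x
  ring

lemma mem_plogLuxemburgSet_iff {σ : ℝ} (hσ : 0 < σ) :
    σ ∈ plogLuxemburgSet μ p f ↔
      ∫ x, |f x| ^ p ∂μ + rpowLogMoment μ p f σ ≤ σ ^ p := by
  rw [plogLuxemburgSet, Set.mem_ofPred_eq, integral_plog_div_rpow hf hL hσ,
    div_le_one (rpow_pos_of_pos hσ p)]
  exact and_iff_right hσ

lemma plogModular_eq (hA : 0 < ∫ x, |f x| ^ p ∂μ) :
    plogModular μ p f =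
      (∫ x, |f x| ^ p ∂μ +
        rpowLogMoment μ p f ((∫ x, |f x| ^ p ∂μ) ^ (1 / p))) ^ (1 / p) := by
  rw [plogModular, integral_add (integrable_rpow_abs_of_integrable_mul_log hf hL)
    (integrable_rpow_abs_mul_log_div hf hL (rpow_pos_of_pos hA _)), rpowLogMoment]

lemma plogModular_mem_plogLuxemburgSet (hp : 0 < p) (hA : 0 < ∫ x, |f x| ^ p ∂μ) :
    plogModular μ p f ∈ plogLuxemburgSet μ p f := by
  rw [plogModular_eq hf hL hA]
  set A := ∫ x, |f x| ^ p ∂μ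
  set N := A ^ (1 / p)
  have hN : 0 < N := rpow_pos_of_pos hA _
  have hAΦ := integral_rpow_abs_le_rpowLogMoment hf hL hN
  set B := A + rpowLogMoment μ p f N
  have hM : 0 < B ^ (1 / p) := rpow_pos_of_pos (by linarith) _
  have hMp : (B ^ (1 / p)) ^ p = B := by rw [one_div, rpow_inv_rpow (by linarith) hp.ne']
  have hNM : N ≤ B ^ (1 / p) := rpow_le_rpow hA.le (by linarith) (by positivity)
  rw [mem_plogLuxemburgSet_iff hf hL hM, hMp]
  linarith [rpowLogMoment_anti hf hL hN hNM]

lemma plogModular_le_two_mul (hp : 1 ≤ p) (hA : 0 < ∫ x, |f x| ^ p ∂μ) {σ : ℝ}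
    (hσ : σ ∈ plogLuxemburgSet μ p f) : plogModular μ p f ≤ 2 * σ := by
  have hp0 : 0 < p := zero_lt_one.trans_le hp
  rw [plogModular_eq hf hL hA]
  set A := ∫ x, |f x| ^ p ∂μ
  have hσ0 : 0 < σ := hσ.1
  have hadm := (mem_plogLuxemburgSet_iff hf hL hσ0).1 hσ
  have hAΦσ := integral_rpow_abs_le_rpowLogMoment hf hL hσ0
  have hN : 0 < A ^ (1 / p) := rpow_pos_of_pos hA _
  have hNp : (A ^ (1 / p)) ^ p = A := by rw [one_div, rpow_inv_rpow hA.le hp0.ne']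
  have hNσ : A ^ (1 / p) ≤ σ := by
    rw [one_div, rpow_inv_le_iff_of_pos hA.le hσ0.le hp0]
    linarith
  set N := A ^ (1 / p)
  have hAΦN := integral_rpow_abs_le_rpowLogMoment hf hL hN
  have hlog : log (σ / N) * A ≤ σ ^ p :=
    calc log (σ / N) * A ≤ (σ / N) ^ p * A := by
          gcongr
          exact (log_le_self (by positivity)).trans
            (self_le_rpow_of_one_le ((one_le_div hN).2 hNσ) hp)
      _ = σ ^ p := by rw [div_rpow hσ0.le hN.le, hNp]; field_simp
  have hΦ := rpowLogMoment_le_log_div_mul_add hf hL hN hNσ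
  have h2 : (2 : ℝ) ≤ 2 ^ p := self_le_rpow_of_one_le one_le_two hp
  rw [one_div, rpow_inv_le_iff_of_pos (by linarith) (by positivity) hp0,
    mul_rpow zero_le_two hσ0.le]
  nlinarith [rpow_pos_of_pos hσ0 p]

theorem sInf_plogLuxemburgSet_le_plogModular_le (hp : 1 ≤ p) (hA : 0 < ∫ x, |f x| ^ p ∂μ) :
    sInf (plogLuxemburgSet μ p f) ≤ plogModular μ p f ∧
      plogModular μ p f ≤ 2 * sInf (plogLuxemburgSet μ p f) := by
  have hM := plogModular_mem_plogLuxemburgSet hf hL (zero_lt_one.trans_le hp) hA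
  refine ⟨csInf_le ⟨0, fun σ hσ => hσ.1.le⟩ hM, ?_⟩
  rw [← div_le_iff₀' two_pos]
  exact le_csInf ⟨_, hM⟩ fun σ hσ =>
    (div_le_iff₀' two_pos).2 (plogModular_le_two_mul hf hL hp hA hσ)

end PLog

theorem luxNormPlog_le_modularPlog_le_general (Ω : Set (EuclideanSpace ℝ (Fin n)))
    (hΩpos : 0 < volume Ω)
    (p : ℝ) (hp : 1 < p)
    (f : EuclideanSpace ℝ (Fin n) → ℝ) (hf : Measurable f)
    (hmem : Integrable
      (fun x => |f x| ^ p + |f x| ^ p * Real.log (Real.exp 1 + |f x|))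
      (volume.restrict Ω))
    (hpos : 0 < meanLpNorm Ω p f) :
    luxNormPlog Ω p f ≤ modularPlog Ω p f ∧
      modularPlog Ω p f ≤ 4 * luxNormPlog Ω p f := by
  -- By definition of `⨍`, `luxNormPlog Ω p f = sInf (plogLuxemburgSet ν p f)` and
  -- `modularPlog Ω p f = plogModular ν p f`.
  set ν := (volume.restrict Ω Set.univ)⁻¹ • volume.restrict Ω
  have hL : Integrable (fun x => |f x| ^ p * log (exp 1 + |f x|)) ν :=
    (integrable_rpow_abs_mul_log_of_integrable_add hf.aemeasurable hmem).smul_measure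
      (ENNReal.inv_ne_top.2 (by simpa using hΩpos.ne'))
  have hA : 0 < ∫ x, |f x| ^ p ∂ν := by
    refine (integral_nonneg fun x => by positivity).lt_of_ne fun h0 => hpos.ne' ?_
    change (∫ x, |f x| ^ p ∂ν) ^ (1 / p) = 0
    rw [← h0, zero_rpow (one_div_pos.2 (by linarith)).ne']
  obtain ⟨hlower, hupper⟩ :=
    sInf_plogLuxemburgSet_le_plogModular_le hf.aemeasurable hL hp.le hA
  have hS : 0 ≤ sInf (plogLuxemburgSet ν p f) := Real.sInf_nonneg fun σ hσ => hσ.1.le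
  exact ⟨hlower, hupper.trans (mul_le_mul_of_nonneg_right (by norm_num) hS)⟩

theorem luxNormPlog_le_modularPlog_le (Ω : Set (EuclideanSpace ℝ (Fin n)))
    (hΩm : MeasurableSet Ω) (hΩfin : volume Ω < ⊤) (hΩpos : 0 < volume Ω)
    (p : ℝ) (hp : 1 < p)
    (f : EuclideanSpace ℝ (Fin n) → ℝ) (hf : Measurable f)
    (hmem : Integrable
      (fun x => |f x| ^ p + |f x| ^ p * Real.log (Real.exp 1 + |f x|))
      (volume.restrict Ω))
    (hpos : 0 < meanLpNorm Ω p f) :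
    luxNormPlog Ω p f ≤ modularPlog Ω p f ∧
      modularPlog Ω p f ≤ 4 * luxNormPlog Ω p f :=
  luxNormPlog_le_modularPlog_le_general Ω hΩpos p hp f hf hmem hpos
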